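/- arXiv:math/0701372 — 4 statements merged into one kernel-verified Lean document; each statement's English description precedes it below -/
import Mathlib

section
/- Let μ, ν, ρ be probability measures on a measurable space X. Then (1/2)‖μ − ν‖_TV = (1/2)‖μ − ρ‖_TV + (1/2)‖ρ − ν‖_TV if and only if there exists a measurable set E such that μ(A) ≤ ρ(A) ≤ ν(A) for all measurable A ⊆ E and ν(A') ≤ ρ(A') ≤ μ(A') for all measurable A' ⊆ Eᶜ. -/
/-!
For signed measures of total mass zero, such as `μ - ν` for probability measures, half the
total variation is `max_A s A`, attained exactly on the positive sets `P` of Hahn decompositions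
of `s`. Writing `μ - ν = (μ - ρ) + (ρ - ν)`, the maximum is subadditive, with equality exactly
when a single set `P` maximizes both `μ - ρ` and `ρ - ν`, i.e. is a common Hahn positive set
for them; the set `E` of the theorem is its complement.
-/

open MeasureTheory Set VectorMeasure

namespace MeasureTheory

namespace SignedMeasure

variable {X : Type*} [MeasurableSpace X] {s s₁ s₂ : SignedMeasure X} {i j A : Set X}

def IsHahnPositive (s : SignedMeasure X) (i : Set X) : Prop :=
  MeasurableSet i ∧ 0 ≤[i] s ∧ s ≤[iᶜ] 0

theorem exists_isHahnPositive (s : SignedMeasure X) : ∃ i, s.IsHahnPositive i :=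
  s.exists_compl_positive_negative

theorem IsHahnPositive.apply_nonneg (h : s.IsHahnPositive i) : 0 ≤ s i :=
  nonneg_of_zero_le_restrict s h.2.1

theorem IsHahnPositive.apply_le (h : s.IsHahnPositive i) (hA : MeasurableSet A) : s A ≤ s i := by
  obtain ⟨hi, hpos, hneg⟩ := h
  have hout : s (A \ i) ≤ 0 :=
    (restrict_le_restrict_iff _ _ hi.compl).1 hneg (hA.diff hi) fun _ hx => hx.2
  have hin : 0 ≤ s (i \ A) := (restrict_le_restrict_iff _ _ hi).1 hpos (hi.diff hA) sdiff_subset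
  have hA' := s.of_add_of_sdiff (hA.inter hi) hA inter_subset_left
  have hi' := s.of_add_of_sdiff (hA.inter hi) hi inter_subset_right
  rw [sdiff_self_inter] at hA'
  rw [sdiff_inter_self_eq_sdiff] at hi'
  linarith

theorem IsHahnPositive.apply_eq (hi : s.IsHahnPositive i) (hj : s.IsHahnPositive j) :
    s i = s j :=
  le_antisymm (hj.apply_le hi.1) (hi.apply_le hj.1)

theorem isHahnPositive_of_forall_apply_le (hi : MeasurableSet i)
    (h : ∀ A, MeasurableSet A → s A ≤ s i) : s.IsHahnPositive i := by
  refine ⟨hi, (restrict_le_restrict_iff _ _ hi).2 fun A hA hAi => ?_,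
    (restrict_le_restrict_iff _ _ hi.compl).2 fun A hA hAi => ?_⟩
  · rw [zero_apply]
    linarith [h _ (hi.diff hA), s.of_sdiff hA hi hAi]
  · rw [zero_apply]
    linarith [h _ (hi.union hA), s.of_union (subset_compl_iff_disjoint_left.1 hAi) hi hA]

theorem IsHahnPositive.add (h₁ : s₁.IsHahnPositive i) (h₂ : s₂.IsHahnPositive i) :
    (s₁ + s₂).IsHahnPositive i :=
  isHahnPositive_of_forall_apply_le h₁.1 fun _ hA => by
    simpa only [add_apply] using add_le_add (h₁.apply_le hA) (h₂.apply_le hA)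

theorem IsHahnPositive.totalVariation_univ (h : s.IsHahnPositive i) (hs : s univ = 0) :
    s.totalVariation univ = 2 * ENNReal.ofReal (s i) := by
  obtain ⟨i₀, hi₀, hpos, hneg, hposPart, hnegPart⟩ := s.toJordanDecomposition_spec
  have hi₀i : s i₀ = s i := IsHahnPositive.apply_eq ⟨hi₀, hpos, hneg⟩ h
  rw [totalVariation, Measure.add_apply, hposPart, hnegPart,
    toMeasureOfZeroLE_apply _ hpos hi₀ MeasurableSet.univ,
    toMeasureOfLEZero_apply _ hneg hi₀.compl MeasurableSet.univ, ← ENNReal.ofReal_eq_coe_nnreal,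
    ← ENNReal.ofReal_eq_coe_nnreal, inter_univ, inter_univ, of_compl hi₀, hs, zero_sub, neg_neg,
    hi₀i, two_mul]

theorem totalVariation_add_eq_iff (hs₁ : s₁ univ = 0) (hs₂ : s₂ univ = 0) :
    (s₁ + s₂).totalVariation univ = s₁.totalVariation univ + s₂.totalVariation univ ↔
      ∃ i, s₁.IsHahnPositive i ∧ s₂.IsHahnPositive i := by
  have hs : (s₁ + s₂) univ = 0 := by rw [add_apply, hs₁, hs₂, add_zero]
  obtain ⟨i, hi⟩ := (s₁ + s₂).exists_isHahnPositive
  obtain ⟨j₁, hj₁⟩ := s₁.exists_isHahnPositive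
  obtain ⟨j₂, hj₂⟩ := s₂.exists_isHahnPositive
  rw [hi.totalVariation_univ hs, hj₁.totalVariation_univ hs₁, hj₂.totalVariation_univ hs₂,
    ← mul_add, ENNReal.mul_right_inj two_ne_zero ENNReal.ofNat_ne_top,
    ← ENNReal.ofReal_add hj₁.apply_nonneg hj₂.apply_nonneg,
    ENNReal.ofReal_eq_ofReal_iff hi.apply_nonneg (add_nonneg hj₁.apply_nonneg hj₂.apply_nonneg),
    add_apply]
  constructor
  · intro h
    have h₁ := hj₁.apply_le hi.1
    have h₂ := hj₂.apply_le hi.1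
    exact ⟨i, isHahnPositive_of_forall_apply_le hi.1 fun A hA => by linarith [hj₁.apply_le hA],
      isHahnPositive_of_forall_apply_le hi.1 fun A hA => by linarith [hj₂.apply_le hA]⟩
  · rintro ⟨k, hk₁, hk₂⟩
    have h := hi.apply_eq (hk₁.add hk₂)
    rw [add_apply, add_apply] at h
    rw [h, hk₁.apply_eq hj₁, hk₂.apply_eq hj₂]

end SignedMeasure

namespace Measure

variable {X : Type*} [MeasurableSpace X] {μ ν : Measure X} [IsFiniteMeasure μ] [IsFiniteMeasure ν]
  {A i : Set X}

theorem zero_le_toSignedMeasure_sub_apply_iff (hA : MeasurableSet A) :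
    0 ≤ (μ.toSignedMeasure - ν.toSignedMeasure) A ↔ ν A ≤ μ A := by
  rw [toSignedMeasure_sub_apply hA, sub_nonneg, measureReal_def, measureReal_def,
    ENNReal.toReal_le_toReal (measure_ne_top _ _) (measure_ne_top _ _)]

theorem toSignedMeasure_sub_apply_nonpos_iff (hA : MeasurableSet A) :
    (μ.toSignedMeasure - ν.toSignedMeasure) A ≤ 0 ↔ μ A ≤ ν A := by
  rw [toSignedMeasure_sub_apply hA, sub_nonpos, measureReal_def, measureReal_def,
    ENNReal.toReal_le_toReal (measure_ne_top _ _) (measure_ne_top _ _)]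

theorem isHahnPositive_toSignedMeasure_sub_iff :
    (μ.toSignedMeasure - ν.toSignedMeasure).IsHahnPositive i ↔
      MeasurableSet i ∧ (∀ A, MeasurableSet A → A ⊆ i → ν A ≤ μ A) ∧
        (∀ A, MeasurableSet A → A ⊆ iᶜ → μ A ≤ ν A) := by
  refine and_congr_right fun hi => and_congr ?_ ?_
  · rw [restrict_le_restrict_iff _ _ hi]
    exact forall₃_congr fun A hA _ => by rw [zero_apply, zero_le_toSignedMeasure_sub_apply_iff hA]
  · rw [restrict_le_restrict_iff _ _ hi.compl]
    exact forall₃_congr fun A hA _ => by rw [zero_apply, toSignedMeasure_sub_apply_nonpos_iff hA]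

theorem toSignedMeasure_sub_apply_univ [IsProbabilityMeasure μ] [IsProbabilityMeasure ν] :
    (μ.toSignedMeasure - ν.toSignedMeasure) univ = 0 := by
  simp [toSignedMeasure_sub_apply MeasurableSet.univ]

end Measure

end MeasureTheory

/-- Equality in the triangle inequality for total variation is characterized by the
existence of a common ordering set `E`. -/
theorem stmt_3 {X : Type*} [MeasurableSpace X]
    (μ ν ρ : Measure X) [IsProbabilityMeasure μ] [IsProbabilityMeasure ν]
    [IsProbabilityMeasure ρ] :
    (μ.toSignedMeasure - ν.toSignedMeasure).totalVariation Set.univ / 2 =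
        (μ.toSignedMeasure - ρ.toSignedMeasure).totalVariation Set.univ / 2 +
          (ρ.toSignedMeasure - ν.toSignedMeasure).totalVariation Set.univ / 2 ↔
      ∃ E : Set X, MeasurableSet E ∧
        (∀ A : Set X, MeasurableSet A → A ⊆ E → μ A ≤ ρ A ∧ ρ A ≤ ν A) ∧
        (∀ A' : Set X, MeasurableSet A' → A' ⊆ Eᶜ → ν A' ≤ ρ A' ∧ ρ A' ≤ μ A') := by
  have key := SignedMeasure.totalVariation_add_eq_iff
    (Measure.toSignedMeasure_sub_apply_univ (μ := μ) (ν := ρ))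
    (Measure.toSignedMeasure_sub_apply_univ (μ := ρ) (ν := ν))
  rw [sub_add_sub_cancel] at key
  rw [← ENNReal.add_div, ENNReal.div_eq_div_iff two_ne_zero ENNReal.ofNat_ne_top two_ne_zero
    ENNReal.ofNat_ne_top, ENNReal.mul_right_inj two_ne_zero ENNReal.ofNat_ne_top, key]
  simp only [Measure.isHahnPositive_toSignedMeasure_sub_iff]
  constructor
  · rintro ⟨P, ⟨hP, hμρ, hρμ⟩, -, hρν, hνρ⟩
    exact ⟨Pᶜ, hP.compl, fun A hA hAE => ⟨hρμ A hA hAE, hνρ A hA hAE⟩,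
      fun A hA hAE => ⟨hρν A hA (compl_compl P ▸ hAE), hμρ A hA (compl_compl P ▸ hAE)⟩⟩
  · rintro ⟨E, hE, hE_le, hEc_le⟩
    refine ⟨Eᶜ, ⟨hE.compl, fun A hA hAE => (hEc_le A hA hAE).2, fun A hA hAE => ?_⟩,
      ⟨hE.compl, fun A hA hAE => (hEc_le A hA hAE).1, fun A hA hAE => ?_⟩⟩
    · exact (hE_le A hA (compl_compl E ▸ hAE)).1
    · exact (hE_le A hA (compl_compl E ▸ hAE)).2
end

section
/- Let (X,d) be a non-branching geodesic metric space, R : X → X an isometric involution with fixed-point set H, and X₁, X₂ disjoint open sets with X ∖ H = X₁ ∪ X₂ and R(X₁) = X₂. Let x ∈ X₁ and y ∈ X₂ satisfy d(x,z) = d(y,z) for all z ∈ H. If every continuous path from X₁ to X₂ meets H, then y = R(x). -/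
/-!
Take a geodesic `γ` from `x` to `y`. It crosses the mirror `H`, and since `x` and `y` are
equidistant from every point of `H`, it does so at its midpoint `m`. Every geodesic from `x` to
`R x` also crosses `H` at some `w`, so `d(x, R x) = 2 d(x, w) ≥ d(x, y)`, while the path through
`m` gives `d(x, R x) ≤ 2 d(x, m) = d(x, y)`. Hence following `γ` up to `m` and then the mirror
image of its first half is a geodesic from `x` to `R x` of the same length as `γ`, sharing its
first half; non-branching forces `y = R x`.
-/

open Set

/-- `γ` is a (unit-interval parametrized) minimal geodesic from `a` to `b`. -/
def IsMinGeodesic {X : Type*} [MetricSpace X] (γ : ℝ → X) (a b : X) : Prop :=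
  γ 0 = a ∧ γ 1 = b ∧
    ∀ s ∈ Set.Icc (0 : ℝ) 1, ∀ t ∈ Set.Icc (0 : ℝ) 1,
      dist (γ s) (γ t) = |s - t| * dist a b

section

variable {X : Type*} [MetricSpace X]

lemma Isometry.dist_apply_of_apply_eq_self {R : X → X} (hR : Isometry R) {w : X}
    (hw : R w = w) (p : X) : dist w (R p) = dist w p := by
  simpa [hw] using hR.dist_eq w p

lemma Isometry.dist_self_apply_le {R : X → X} (hR : Isometry R) {w : X} (hw : R w = w)
    (x : X) : dist x (R x) ≤ 2 * dist x w := by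
  calc dist x (R x) ≤ dist x w + dist w (R x) := dist_triangle _ _ _
    _ = 2 * dist x w := by rw [hR.dist_apply_of_apply_eq_self hw, dist_comm w x]; ring

lemma dist_le_two_mul_of_dist_eq {x y w : X} (h : dist x w = dist y w) :
    dist x y ≤ 2 * dist x w := by
  linarith [dist_triangle x w y, dist_comm w y]

namespace IsMinGeodesic

variable {γ : ℝ → X} {a b : X}

lemma of_forall_le (h0 : γ 0 = a) (h1 : γ 1 = b)
    (h : ∀ s ∈ Icc (0 : ℝ) 1, ∀ t ∈ Icc (0 : ℝ) 1, s ≤ t →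
      dist (γ s) (γ t) = (t - s) * dist a b) :
    IsMinGeodesic γ a b := by
  refine ⟨h0, h1, fun s hs t ht => ?_⟩
  rcases le_total s t with hst | hts
  · rw [h s hs t ht hst, abs_of_nonpos (sub_nonpos.2 hst), neg_sub]
  · rw [dist_comm, h t ht s hs hts, abs_of_nonneg (sub_nonneg.2 hts)]

lemma continuousOn (h : IsMinGeodesic γ a b) : ContinuousOn γ (Icc 0 1) := by
  have : LipschitzOnWith (Real.toNNReal (dist a b)) γ (Icc 0 1) := by
    rw [lipschitzOnWith_iff_dist_le_mul]
    intro s hs t ht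
    rw [h.2.2 s hs t ht, Real.coe_toNNReal _ dist_nonneg, Real.dist_eq, mul_comm]
  exact this.continuousOn

lemma dist_left (h : IsMinGeodesic γ a b) {t : ℝ} (ht : t ∈ Icc (0 : ℝ) 1) :
    dist a (γ t) = t * dist a b := by
  rw [← h.1, h.2.2 0 (left_mem_Icc.2 zero_le_one) t ht, h.1, zero_sub, abs_neg,
    abs_of_nonneg ht.1]

lemma dist_right (h : IsMinGeodesic γ a b) {t : ℝ} (ht : t ∈ Icc (0 : ℝ) 1) :
    dist (γ t) b = (1 - t) * dist a b := by
  rw [← h.2.1, h.2.2 t ht 1 (right_mem_Icc.2 zero_le_one), h.2.1, abs_sub_comm,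
    abs_of_nonneg (sub_nonneg.2 ht.2)]

lemma dist_add_dist (h : IsMinGeodesic γ a b) {t : ℝ} (ht : t ∈ Icc (0 : ℝ) 1) :
    dist a (γ t) + dist (γ t) b = dist a b := by
  rw [h.dist_left ht, h.dist_right ht]; ring

lemma eq_half_of_dist_eq (h : IsMinGeodesic γ a b) (hab : a ≠ b) {t : ℝ}
    (ht : t ∈ Icc (0 : ℝ) 1) (heq : dist a (γ t) = dist b (γ t)) : t = 1 / 2 := by
  rw [dist_comm b, h.dist_left ht, h.dist_right ht] at heq
  have hpos : 0 < dist a b := dist_pos.2 hab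
  nlinarith

lemma comp_isometry (h : IsMinGeodesic γ a b) {f : X → X} (hf : Isometry f) :
    IsMinGeodesic (f ∘ γ) (f a) (f b) :=
  ⟨congrArg f h.1, congrArg f h.2.1, fun s hs t ht => by
    simp only [Function.comp_apply, hf.dist_eq, h.2.2 s hs t ht]⟩

lemma segment (h : IsMinGeodesic γ a b) {u v : ℝ} (hu : u ∈ Icc (0 : ℝ) 1)
    (hv : v ∈ Icc (0 : ℝ) 1) :
    IsMinGeodesic (fun t => γ (u + (v - u) * t)) (γ u) (γ v) := by
  have hmem : ∀ t ∈ Icc (0 : ℝ) 1, u + (v - u) * t ∈ Icc (0 : ℝ) 1 := fun t ht => by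
    have hconv := convex_Icc (0 : ℝ) 1 hu hv (sub_nonneg.2 ht.2) ht.1 (by ring)
    simp only [smul_eq_mul] at hconv
    convert hconv using 1; ring
  refine ⟨by simp, by simp, fun s hs t ht => ?_⟩
  rw [h.2.2 _ (hmem s hs) _ (hmem t ht), h.2.2 u hu v hv,
    show u + (v - u) * s - (u + (v - u) * t) = (u - v) * (t - s) by ring, abs_mul,
    abs_sub_comm t s, mul_assoc, mul_left_comm]

lemma append {γ₁ γ₂ : ℝ → X} {m : X} (h₁ : IsMinGeodesic γ₁ a m)
    (h₂ : IsMinGeodesic γ₂ m b) (ham : dist a m = dist a b / 2)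
    (hmb : dist m b = dist a b / 2) :
    IsMinGeodesic (fun t => if t ≤ 1 / 2 then γ₁ (2 * t) else γ₂ (2 * t - 1)) a b := by
  refine of_forall_le (by simp [h₁.1]) (by norm_num [h₂.2.1]) fun s hs t ht hst => ?_
  have h₁mem : ∀ r ∈ Icc (0 : ℝ) 1, r ≤ 1 / 2 → 2 * r ∈ Icc (0 : ℝ) 1 :=
    fun r hr hr' => ⟨by linarith [hr.1], by linarith⟩
  have h₂mem : ∀ r ∈ Icc (0 : ℝ) 1, ¬r ≤ 1 / 2 → 2 * r - 1 ∈ Icc (0 : ℝ) 1 :=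
    fun r hr hr' => ⟨by linarith [not_le.1 hr'], by linarith [hr.2]⟩
  by_cases hs' : s ≤ 1 / 2 <;> by_cases ht' : t ≤ 1 / 2 <;> simp only [hs', ht', if_true,
    if_false]
  · rw [h₁.2.2 _ (h₁mem s hs hs') _ (h₁mem t ht ht'), ham,
      abs_of_nonpos (by linarith)]; ring
  · have hs₁ := h₁mem s hs hs'
    have ht₂ := h₂mem t ht ht'
    have hupper := dist_triangle (γ₁ (2 * s)) m (γ₂ (2 * t - 1))
    have hlower := dist_triangle4 a (γ₁ (2 * s)) (γ₂ (2 * t - 1)) b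
    rw [h₁.dist_right hs₁, h₂.dist_left ht₂, ham, hmb] at hupper
    rw [h₁.dist_left hs₁, h₂.dist_right ht₂, ham, hmb] at hlower
    linarith
  · exact absurd (hst.trans ht') hs'
  · rw [h₂.2.2 _ (h₂mem s hs hs') _ (h₂mem t ht ht'), hmb,
      abs_of_nonpos (by linarith)]; ring

lemma reflect {R : X → X} (h : IsMinGeodesic γ a b) (hR : Isometry R)
    (hmid : R (γ (1 / 2)) = γ (1 / 2)) (hd : dist a (R a) = dist a b) :
    IsMinGeodesic (fun t => if t ≤ 1 / 2 then γ t else R (γ (1 - t))) a (R a) := by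
  have h0 : (0 : ℝ) ∈ Icc (0 : ℝ) 1 := left_mem_Icc.2 zero_le_one
  have hhalf : (1 / 2 : ℝ) ∈ Icc (0 : ℝ) 1 := ⟨by norm_num, by norm_num⟩
  have hfirst := h.segment h0 hhalf
  have hsecond := (h.segment hhalf h0).comp_isometry hR
  rw [h.1] at hfirst hsecond
  rw [hmid] at hsecond
  have ham : dist a (γ (1 / 2)) = dist a (R a) / 2 := by
    rw [h.dist_left hhalf, hd]; ring
  have hmb : dist (γ (1 / 2)) (R a) = dist a (R a) / 2 := by
    rw [hR.dist_apply_of_apply_eq_self hmid, dist_comm, ham]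
  convert hfirst.append hsecond ham hmb using 2 with t
  split_ifs
  · congr 1; ring
  · simp only [Function.comp_apply]; congr 2; ring

end IsMinGeodesic

end

theorem stmt_8_general {X : Type*} [MetricSpace X]
    (hgeo : ∀ a b : X, ∃ γ : ℝ → X, IsMinGeodesic γ a b)
    (hnb : ∀ (a b b' : X) (γ γ' : ℝ → X), IsMinGeodesic γ a b → IsMinGeodesic γ' a b' →
      dist a b = dist a b' →
      (∃ ε > 0, ∀ t ∈ Set.Icc (0 : ℝ) ε, γ t = γ' t) →
      ∀ t ∈ Set.Icc (0 : ℝ) 1, γ t = γ' t)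
    (R : X → X) (hRiso : Isometry R)
    (X₁ X₂ : Set X) (hdisj : Disjoint X₁ X₂)
    (hswap : R '' X₁ = X₂)
    (x y : X) (hx : x ∈ X₁) (hy : y ∈ X₂)
    (heq : ∀ z : X, R z = z → dist x z = dist y z)
    (hmeet : ∀ c : ℝ → X, ContinuousOn c (Set.Icc (0 : ℝ) 1) →
      c 0 ∈ X₁ → c 1 ∈ X₂ → ∃ t ∈ Set.Icc (0 : ℝ) 1, R (c t) = c t) :
    y = R x := by
  obtain ⟨γ, hγ⟩ := hgeo x y
  obtain ⟨t₀, ht₀, hmid⟩ := hmeet γ hγ.continuousOn (hγ.1 ▸ hx) (hγ.2.1 ▸ hy)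
  obtain rfl : t₀ = 1 / 2 :=
    hγ.eq_half_of_dist_eq (hdisj.ne_of_mem hx hy) ht₀ (heq _ hmid)
  obtain ⟨σ, hσ⟩ := hgeo x (R x)
  obtain ⟨t₁, ht₁, hw⟩ :=
    hmeet σ hσ.continuousOn (hσ.1 ▸ hx) (hσ.2.1 ▸ hswap ▸ mem_image_of_mem R hx)
  have hxRx : dist x (R x) = dist x y := by
    refine le_antisymm ?_ ?_
    · linarith [hRiso.dist_self_apply_le hmid x, hγ.dist_left ht₀]
    · linarith [hσ.dist_add_dist ht₁, hRiso.dist_apply_of_apply_eq_self hw x,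
        dist_comm x (σ t₁), dist_le_two_mul_of_dist_eq (heq _ hw)]
  have hagree : ∃ ε > 0, ∀ t ∈ Icc (0 : ℝ) ε,
      γ t = if t ≤ 1 / 2 then γ t else R (γ (1 - t)) :=
    ⟨1 / 2, one_half_pos, fun t ht => (if_pos ht.2).symm⟩
  have hend := hnb x y (R x) γ _ hγ (hγ.reflect hRiso hmid hxRx) hxRx.symm hagree 1
    (right_mem_Icc.2 zero_le_one)
  rwa [hγ.2.1, if_neg (by norm_num), sub_self, hγ.1] at hend

/-- In a non-branching geodesic space with a reflection structure, a point of `X₁` and a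
point of `X₂` equidistant from the mirror `H` are reflections of each other. -/
theorem stmt_8 {X : Type*} [MetricSpace X]
    (hgeo : ∀ a b : X, ∃ γ : ℝ → X, IsMinGeodesic γ a b)
    (hnb : ∀ (a b b' : X) (γ γ' : ℝ → X), IsMinGeodesic γ a b → IsMinGeodesic γ' a b' →
      dist a b = dist a b' →
      (∃ ε > 0, ∀ t ∈ Set.Icc (0 : ℝ) ε, γ t = γ' t) →
      ∀ t ∈ Set.Icc (0 : ℝ) 1, γ t = γ' t)
    (R : X → X) (hRiso : Isometry R) (hRinv : R ∘ R = id)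
    (X₁ X₂ : Set X) (hX₁ : IsOpen X₁) (hX₂ : IsOpen X₂) (hdisj : Disjoint X₁ X₂)
    (hsplit : X₁ ∪ X₂ = {x : X | R x = x}ᶜ) (hswap : R '' X₁ = X₂)
    (x y : X) (hx : x ∈ X₁) (hy : y ∈ X₂)
    (heq : ∀ z : X, R z = z → dist x z = dist y z)
    (hmeet : ∀ c : ℝ → X, ContinuousOn c (Set.Icc (0 : ℝ) 1) →
      c 0 ∈ X₁ → c 1 ∈ X₂ → ∃ t ∈ Set.Icc (0 : ℝ) 1, R (c t) = c t) :
    y = R x :=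
  stmt_8_general hgeo hnb R hRiso X₁ X₂ hdisj hswap x y hx hy heq hmeet
end

section
/- Let X be a metric space carrying a family of probability measures (p_s(x,·))_{s>0, x∈X} such that for a fixed sequence s_n ↓ 0, a positive function ρ with ρ(s_n) → 0, and a strictly increasing function Ψ : [0,∞) → [0,∞), one has −lim_{n→∞} ρ(s_n) log p_{s_n}(x, A) = Ψ(d(x,A)) for all x in a set Y and all Borel A. If x, y ∈ Y satisfy p_{s_n}(x, A) ≥ p_{s_n}(y, A) for all Borel A contained in a fixed set X₁ ∪ H and all n, then d(x, z) ≤ d(y, z) for every z in the interior of X₁. -/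
open MeasureTheory

/-- Under a Varadhan-type short-time asymptotic for the transition probabilities,
domination of transition probabilities on sets in `X₁ ∪ H` forces `d(x,z) ≤ d(y,z)`
for `z` in the interior of `X₁`. -/
theorem stmt_9 {X : Type*} [MetricSpace X] [MeasurableSpace X] [OpensMeasurableSpace X]
    (p : ℝ → X → Measure X) (hp : ∀ s x, IsProbabilityMeasure (p s x))
    (s : ℕ → ℝ) (hs_pos : ∀ n, 0 < s n) (hs_anti : StrictAnti s)
    (hs_lim : Filter.Tendsto s Filter.atTop (nhds 0))
    (ρ : ℝ → ℝ) (hρ_pos : ∀ u > 0, 0 < ρ u)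
    (hρ_lim : Filter.Tendsto (fun n => ρ (s n)) Filter.atTop (nhds 0))
    (Ψ : ℝ → ℝ) (hΨ : StrictMonoOn Ψ (Set.Ici 0))
    (Y : Set X)
    (hVaradhan : ∀ x ∈ Y, ∀ A : Set X, MeasurableSet A →
      Filter.Tendsto (fun n => -(ρ (s n) * Real.log ((p (s n) x A).toReal)))
        Filter.atTop (nhds (Ψ (Metric.infDist x A))))
    (X₁ H : Set X) (hX₁ : IsOpen X₁) (hHdisj : Disjoint X₁ H)
    (x y : X) (hx : x ∈ Y) (hy : y ∈ Y)
    (hdom : ∀ n : ℕ, ∀ A : Set X, MeasurableSet A → A ⊆ X₁ ∪ H →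
      p (s n) y A ≤ p (s n) x A) :
    ∀ z ∈ interior X₁, dist x z ≤ dist y z := by
  intro z hz
  -- First, Ψ 0 = 0, by applying the Varadhan hypothesis to A = univ.
  have hΨ0 : Ψ 0 = 0 := by
    have h1 := hVaradhan x hx Set.univ MeasurableSet.univ
    have hconst : (fun n => -(ρ (s n) * Real.log ((p (s n) x Set.univ).toReal)))
        = fun _ : ℕ => (0:ℝ) := by
      funext n
      have := (hp (s n) x).measure_univ
      simp [this]
    rw [hconst, Metric.infDist_zero_of_mem (Set.mem_univ x)] at h1
    exact (tendsto_nhds_unique tendsto_const_nhds h1).symm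
  obtain ⟨ε₀, hε₀pos, hball⟩ := Metric.isOpen_iff.mp hX₁ z (interior_subset hz)
  by_contra hcon
  push_neg at hcon
  have key : ∀ ε : ℝ, 0 < ε → ε ≤ ε₀ → dist x z ≤ dist y z + ε ∨ dist y z = ε := by
    intro ε hε hεε₀
    set B := Metric.ball z ε with hBdef
    have hBmeas : MeasurableSet B := Metric.isOpen_ball.measurableSet
    have hBsub : B ⊆ X₁ ∪ H := fun w hw =>
      Or.inl (hball (Metric.ball_subset_ball hεε₀ hw))
    have hBne : B.Nonempty := ⟨z, Metric.mem_ball_self hε⟩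
    have hVx := hVaradhan x hx B hBmeas
    have hVy := hVaradhan y hy B hBmeas
    by_cases hzero : ∃ᶠ n in Filter.atTop, ((p (s n) y B).toReal = 0)
    · right
      -- along a subsequence the mass of `B` under `p _ y` vanishes
      have hΨy : Ψ (Metric.infDist y B) = 0 := by
        refine (tendsto_nhds_unique_of_frequently_eq hVy tendsto_const_nhds ?_)
        exact hzero.mono (fun n hn => by simp [hn])
      have hdy0 : Metric.infDist y B = 0 := by
        have := hΨ.injOn (Set.mem_Ici.mpr Metric.infDist_nonneg)
          (Set.mem_Ici.mpr le_rfl) (by rw [hΨy, hΨ0])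
        exact this
      have hyle : dist y z ≤ ε := by
        have hmem : y ∈ closure B :=
          (Metric.mem_closure_iff_infDist_zero hBne).mpr hdy0
        have := Metric.closure_ball_subset_closedBall hmem
        simpa [Metric.mem_closedBall, dist_comm] using this
      -- complement: along the same subsequence the mass of `Bᶜ` is 1
      have hBcne : Bᶜ.Nonempty := by
        rcases Set.eq_empty_or_nonempty Bᶜ with hBc | hBc
        · exfalso
          have hBuniv : B = Set.univ := by
            simpa [Set.compl_empty_iff] using hBc
          obtain ⟨n, hn⟩ := hzero.exists
          rw [hBuniv, (hp (s n) y).measure_univ] at hn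
          simp at hn
        · exact hBc
      have hVyc := hVaradhan y hy Bᶜ hBmeas.compl
      have hΨyc : Ψ (Metric.infDist y Bᶜ) = 0 := by
        refine (tendsto_nhds_unique_of_frequently_eq hVyc tendsto_const_nhds ?_)
        refine hzero.mono (fun n hn => ?_)
        have h0 : p (s n) y B = 0 := by
          have hfin : p (s n) y B ≠ ⊤ := measure_ne_top _ _
          exact (ENNReal.toReal_eq_zero_iff _).mp hn |>.resolve_right hfin
        have hc : p (s n) y Bᶜ = 1 := by
          rw [measure_compl hBmeas (measure_ne_top _ _), h0,
            (hp (s n) y).measure_univ]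
          simp
        simp [hc]
      have hdyc0 : Metric.infDist y Bᶜ = 0 := by
        have := hΨ.injOn (Set.mem_Ici.mpr Metric.infDist_nonneg)
          (Set.mem_Ici.mpr le_rfl) (by rw [hΨyc, hΨ0])
        exact this
      have hyge : ε ≤ dist y z := by
        have hmem : y ∈ closure Bᶜ :=
          (Metric.mem_closure_iff_infDist_zero hBcne).mpr hdyc0
        rw [Metric.isOpen_ball.isClosed_compl.closure_eq] at hmem
        simpa [hBdef, Metric.mem_ball, dist_comm, not_lt] using hmem
      linarith
    · left
      rw [Filter.not_frequently] at hzero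
      have hev : ∀ᶠ n in Filter.atTop,
          -(ρ (s n) * Real.log ((p (s n) x B).toReal))
            ≤ -(ρ (s n) * Real.log ((p (s n) y B).toReal)) := by
        filter_upwards [hzero] with n hn
        have hρ := hρ_pos (s n) (hs_pos n)
        have hb0 : 0 < (p (s n) y B).toReal :=
          lt_of_le_of_ne ENNReal.toReal_nonneg (Ne.symm hn)
        have hba : (p (s n) y B).toReal ≤ (p (s n) x B).toReal :=
          ENNReal.toReal_mono (measure_ne_top _ _) (hdom n B hBmeas hBsub)
        have hlog := Real.log_le_log hb0 hba
        nlinarith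
      have hle : Ψ (Metric.infDist x B) ≤ Ψ (Metric.infDist y B) :=
        le_of_tendsto_of_tendsto hVx hVy hev
      have hd : Metric.infDist x B ≤ Metric.infDist y B := by
        by_contra hlt
        push_neg at hlt
        exact absurd hle (not_le.mpr
          (hΨ (Set.mem_Ici.mpr Metric.infDist_nonneg)
            (Set.mem_Ici.mpr Metric.infDist_nonneg) hlt))
      have hyd : Metric.infDist y B ≤ dist y z :=
        Metric.infDist_le_dist_of_mem (Metric.mem_ball_self hε)
      have hxd : dist x z - ε ≤ Metric.infDist x B := by
        by_contra hlt
        push_neg at hlt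
        obtain ⟨w, hw, hww⟩ := (Metric.infDist_lt_iff hBne).mp hlt
        have h1 := dist_triangle x w z
        have h2 : dist w z < ε := Metric.mem_ball.mp hw
        linarith
      linarith
  -- Conclude: pick a suitable ε
  have hm : 0 < min ε₀ (dist x z - dist y z) := lt_min hε₀pos (by linarith)
  set m := min ε₀ (dist x z - dist y z) with hmdef
  have hmε₀ : m ≤ ε₀ := min_le_left _ _
  have hmd : m ≤ dist x z - dist y z := min_le_right _ _
  rcases key (m/2) (by linarith) (by linarith) with h | h
  · linarith
  · rcases key (m/3) (by linarith) (by linarith) with h' | h'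
    · linarith
    · linarith
end

section
/- Let μ₁, μ₂ be probability measures on a measurable space X, μ a coupling of μ₁ and μ₂ with disintegrations μ(dx dy) = k₁(x, dy) μ₁(dx) = k₂(y, dx) μ₂(dy), and μ₀ a measure with μ₀ ≤ μ₁ and μ₀ ≤ μ₂. Then the signed measure ν(dx dy) := μ(dx dy) + (1/2)δ_x(dy)μ₀(dx) + (1/2)∫_X k₂(z,dx)k₁(z,dy)μ₀(dz) − (1/2)k₁(x,dy)μ₀(dx) − (1/2)k₂(y,dx)μ₀(dy) is a coupling of μ₁ and μ₂ whenever it is nonnegative: its first marginal is μ₁ and its second marginal is μ₂. -/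
/-!
Marginals of the correction terms: the diagonal term has both marginals `μ₀`, `μ₀ ⊗ k₁` has
marginals `μ₀` and `k₁ ∘ μ₀`, the swapped `μ₀ ⊗ k₂` has `k₂ ∘ μ₀` and `μ₀`, and the
`k₂ ×ₖ k₁` term has `k₂ ∘ μ₀` and `k₁ ∘ μ₀`. So in each marginal the added and the subtracted
halves agree, and they cancel because `μ₀ ≤ μ₁` is a finite measure.
-/

open MeasureTheory ProbabilityTheory

open scoped ENNReal

namespace MeasureTheory.Measure

variable {α β γ : Type*} [MeasurableSpace α] [MeasurableSpace β] [MeasurableSpace γ]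

theorem add_right_cancel_of_isFiniteMeasure {μ ν ρ : Measure α} [IsFiniteMeasure ρ]
    (h : μ + ρ = ν + ρ) : μ = ν := by
  ext s hs
  exact (ENNReal.add_left_inj (measure_ne_top ρ s)).1 (by simpa using congrArg (· s) h)

theorem fst_smul (c : ℝ≥0∞) (ρ : Measure (α × β)) : (c • ρ).fst = c • ρ.fst :=
  Measure.map_smul c ρ Prod.fst

theorem snd_smul (c : ℝ≥0∞) (ρ : Measure (α × β)) : (c • ρ).snd = c • ρ.snd :=
  Measure.map_smul c ρ Prod.snd

theorem bind_prod_eq_comp (μ : Measure α) (κ : Kernel α β) (η : Kernel α γ) [IsSFiniteKernel κ]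
    [IsSFiniteKernel η] : (μ.bind fun a => (κ a).prod (η a)) = (κ ×ₖ η) ∘ₘ μ := by
  congr
  exact funext fun a => (Kernel.prod_apply κ η a).symm

theorem fst_bind_prod (μ : Measure α) (κ : Kernel α β) (η : Kernel α γ) [IsSFiniteKernel κ]
    [IsMarkovKernel η] : (μ.bind fun a => (κ a).prod (η a)).fst = κ ∘ₘ μ := by
  rw [bind_prod_eq_comp, Measure.fst, map_comp _ _ measurable_fst, ← Kernel.fst_eq,
    Kernel.fst_prod]

theorem snd_bind_prod (μ : Measure α) (κ : Kernel α β) (η : Kernel α γ) [IsMarkovKernel κ]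
    [IsSFiniteKernel η] : (μ.bind fun a => (κ a).prod (η a)).snd = η ∘ₘ μ := by
  rw [bind_prod_eq_comp, Measure.snd, map_comp _ _ measurable_snd, ← Kernel.snd_eq,
    Kernel.snd_prod]

theorem fst_map_diag (μ : Measure α) : (μ.map fun x => (x, x)).fst = μ :=
  (fst_map_prodMk (X := id) measurable_id).trans map_id

theorem snd_map_diag (μ : Measure α) : (μ.map fun x => (x, x)).snd = μ :=
  (snd_map_prodMk (Y := id) measurable_id).trans map_id

end MeasureTheory.Measure

theorem stmt_19_general {X : Type*} [MeasurableSpace X]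
    (μ₁ μ₂ : Measure X) [IsProbabilityMeasure μ₁]
    (μ : Measure (X × X))
    (hμ₁ : μ.map Prod.fst = μ₁) (hμ₂ : μ.map Prod.snd = μ₂)
    (k₁ k₂ : ProbabilityTheory.Kernel X X) [IsMarkovKernel k₁] [IsMarkovKernel k₂]
    (μ₀ : Measure X) (hμ₀₁ : μ₀ ≤ μ₁)
    (ν : Measure (X × X))
    (hν : ν + (2 : ENNReal)⁻¹ • (μ₀.compProd k₁)
            + (2 : ENNReal)⁻¹ • ((μ₀.compProd k₂).map Prod.swap)
        = μ + (2 : ENNReal)⁻¹ • (μ₀.map (fun x => (x, x)))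
            + (2 : ENNReal)⁻¹ • (μ₀.bind (fun z => (k₂ z).prod (k₁ z)))) :
    ν.map Prod.fst = μ₁ ∧ ν.map Prod.snd = μ₂ := by
  have : IsFiniteMeasure μ₀ := isFiniteMeasure_of_le μ₁ hμ₀₁
  have half_ne_top : (2 : ℝ≥0∞)⁻¹ ≠ ∞ := by simp
  have := μ₀.smul_finite half_ne_top
  have := (k₁ ∘ₘ μ₀).smul_finite half_ne_top
  have := (k₂ ∘ₘ μ₀).smul_finite half_ne_top
  constructor
  · have h := congrArg Measure.fst hν
    simp only [Measure.fst_add, Measure.fst_smul, Measure.fst_compProd, Measure.fst_map_swap,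
      Measure.snd_compProd, Measure.fst_map_diag, Measure.fst_bind_prod] at h
    rw [add_assoc, add_assoc] at h
    rw [← hμ₁]
    exact Measure.add_right_cancel_of_isFiniteMeasure h
  · have h := congrArg Measure.snd hν
    simp only [Measure.snd_add, Measure.snd_smul, Measure.snd_compProd, Measure.snd_map_swap,
      Measure.fst_compProd, Measure.snd_map_diag, Measure.snd_bind_prod] at h
    rw [add_assoc, add_assoc, add_comm (_ • k₁ ∘ₘ μ₀)] at h
    rw [← hμ₂]
    exact Measure.add_right_cancel_of_isFiniteMeasure h

/-- Given a coupling `μ` of `μ₁, μ₂` with disintegrations `μ = μ₁ ⊗ k₁ = swap_*(μ₂ ⊗ k₂)`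
and a measure `μ₀ ≤ μ₁, μ₂`, the (signed) modification
`ν = μ + ½ δ_x(dy)μ₀(dx) + ½ ∫ k₂(z,dx)k₁(z,dy)μ₀(dz) − ½ k₁(x,dy)μ₀(dx) − ½ k₂(y,dx)μ₀(dy)`
is again a coupling of `μ₁` and `μ₂` whenever it is a (nonnegative) measure; here the
nonnegativity is expressed by giving `ν` as a measure satisfying the defining equation
with the negative parts moved to the left-hand side. -/
theorem stmt_19 {X : Type*} [MeasurableSpace X]
    (μ₁ μ₂ : Measure X) [IsProbabilityMeasure μ₁] [IsProbabilityMeasure μ₂]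
    (μ : Measure (X × X)) [IsProbabilityMeasure μ]
    (hμ₁ : μ.map Prod.fst = μ₁) (hμ₂ : μ.map Prod.snd = μ₂)
    (k₁ k₂ : ProbabilityTheory.Kernel X X) [IsMarkovKernel k₁] [IsMarkovKernel k₂]
    (hk₁ : μ = μ₁.compProd k₁)
    (hk₂ : μ = (μ₂.compProd k₂).map Prod.swap)
    (μ₀ : Measure X) (hμ₀₁ : μ₀ ≤ μ₁) (hμ₀₂ : μ₀ ≤ μ₂)
    (ν : Measure (X × X))
    (hν : ν + (2 : ENNReal)⁻¹ • (μ₀.compProd k₁)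
            + (2 : ENNReal)⁻¹ • ((μ₀.compProd k₂).map Prod.swap)
        = μ + (2 : ENNReal)⁻¹ • (μ₀.map (fun x => (x, x)))
            + (2 : ENNReal)⁻¹ • (μ₀.bind (fun z => (k₂ z).prod (k₁ z)))) :
    ν.map Prod.fst = μ₁ ∧ ν.map Prod.snd = μ₂ :=
  stmt_19_general μ₁ μ₂ μ hμ₁ hμ₂ k₁ k₂ μ₀ hμ₀₁ ν hν
end
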